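/- Let n ≥ 1, n1 ≥ 2, m ≥ 1, r ≥ 0, let d0 ∈ U(n; 2^m), d1 ∈ U(n1; 2^m) (i.e., m1 = m, m2 = 0), let d2 be a column-balanced n1×r matrix with entries in {1,2}, let D3 be the corresponding column augmented design, and let D3b be D3 with the appended blocking column. Then WD(D3b) ≥ C(r+1) + (n²/(n+n1)²)·(3/2)^{r+1}·WD(d0) + (1/(n+n1)²)·(5/4)^m·(23/18)^r·( (3/2)·T1' + 2·(5/4)·( p1·(6/5)^{w1} + q1·(6/5)^{w1+1} ) ). -/

import Mathlib

open Finset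

noncomputable section

namespace CAUD

/-- The mapped point value `u = (2x+1)/(2q)`. -/
def uVal (q x : ℕ) : ℝ := (2 * (x : ℝ) + 1) / (2 * (q : ℝ))

/-- The squared wrap-around L2-discrepancy of an `N × M` design whose `k`-th
column takes values in `{0, …, q k - 1}`. -/
def WD {N M : ℕ} (q : Fin M → ℕ) (x : Fin N → Fin M → ℕ) : ℝ :=
  -((4 : ℝ) / 3) ^ M + (1 / (N : ℝ) ^ 2) *
    ∑ i : Fin N, ∑ j : Fin N, ∏ k : Fin M,
      ((3 : ℝ) / 2 - |uVal (q k) (x i k) - uVal (q k) (x j k)| *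
        (1 - |uVal (q k) (x i k) - uVal (q k) (x j k)|))

/-- A mixed-level U-type design in `U(N; 2^{m1} 3^{m2})`: the first `m1` columns are
two-level and balanced, the last `m2` columns are three-level and balanced. -/
def IsUType (N m1 m2 : ℕ) (d : Fin N → Fin (m1 + m2) → ℕ) : Prop :=
  ∀ k : Fin (m1 + m2),
    if (k : ℕ) < m1 then
      (∀ i, d i k < 2) ∧ ∀ v < 2, 2 * (univ.filter (fun i => d i k = v)).card = N
    else
      (∀ i, d i k < 3) ∧ ∀ v < 3, 3 * (univ.filter (fun i => d i k = v)).card = N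

/-- A column-balanced `n1 × r` matrix with entries in `{1, 2}`: every column has
exactly `n1/2` entries equal to 1 and `n1/2` entries equal to 2. -/
def IsBalanced (n1 r : ℕ) (d2 : Fin n1 → Fin r → ℕ) : Prop :=
  (∀ i k, d2 i k = 1 ∨ d2 i k = 2) ∧
  ∀ k, 2 * (univ.filter (fun i => d2 i k = 1)).card = n1 ∧
       2 * (univ.filter (fun i => d2 i k = 2)).card = n1

/-- The column augmented design: first `n` rows are `(d0, 0)`, last `n1` rows `(d1, d2)`. -/
def augDesign (n n1 m r : ℕ) (d0 : Fin n → Fin m → ℕ) (d1 : Fin n1 → Fin m → ℕ)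
    (d2 : Fin n1 → Fin r → ℕ) : Fin (n + n1) → Fin (m + r) → ℕ := fun i k =>
  if hi : (i : ℕ) < n then
    if hk : (k : ℕ) < m then d0 ⟨i, hi⟩ ⟨k, hk⟩ else 0
  else
    if hk : (k : ℕ) < m then d1 ⟨(i : ℕ) - n, by have := i.isLt; omega⟩ ⟨k, hk⟩
    else d2 ⟨(i : ℕ) - n, by have := i.isLt; omega⟩ ⟨(k : ℕ) - m, by have := k.isLt; omega⟩

/-- Append one blocking column: 0 on the initial rows, 1 on the follow-up rows. -/
def appendOne (n n1 M : ℕ) (D : Fin (n + n1) → Fin M → ℕ) :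
    Fin (n + n1) → Fin (M + 1) → ℕ := fun i k =>
  if hk : (k : ℕ) < M then D i ⟨k, hk⟩ else if (i : ℕ) < n then 0 else 1

/-- Append two blocking columns: the first is 0 on the initial rows and 1 on the
follow-up rows; the second is 0 on the initial rows and the first `n1/2` follow-up
rows, and 1 on the remaining follow-up rows. -/
def appendTwo (n n1 M : ℕ) (D : Fin (n + n1) → Fin M → ℕ) :
    Fin (n + n1) → Fin (M + 2) → ℕ := fun i k =>
  if hk : (k : ℕ) < M then D i ⟨k, hk⟩
  else if (k : ℕ) = M then (if (i : ℕ) < n then 0 else 1)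
  else (if (i : ℕ) < n + n1 / 2 then 0 else 1)

/-- Level sizes of the (possibly blocking-augmented) column augmented design:
first `m1` columns are two-level, the next `m2 + r` are three-level, anything
after that (blocking columns) is two-level. -/
def qfun (m1 m2 r k : ℕ) : ℕ :=
  if k < m1 then 2 else if k < m1 + m2 + r then 3 else 2

/-- Coincidence number among the first `m1` columns. -/
def Fco {N M : ℕ} (m1 : ℕ) (D : Fin N → Fin M → ℕ) (i j : Fin N) : ℕ :=
  (univ.filter (fun k : Fin M => (k : ℕ) < m1 ∧ D i k = D j k)).card

/-- Coincidence number among columns `m1, …, m1 + m2 - 1`. -/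
def Vco {N M : ℕ} (m1 m2 : ℕ) (D : Fin N → Fin M → ℕ) (i j : Fin N) : ℕ :=
  (univ.filter (fun k : Fin M => m1 ≤ (k : ℕ) ∧ (k : ℕ) < m1 + m2 ∧ D i k = D j k)).card

/-- Coincidence number among the columns `≥ m`, counting agreements with common
value in `{1, 2}`. -/
def Tco {N M : ℕ} (m : ℕ) (D : Fin N → Fin M → ℕ) (i j : Fin N) : ℕ :=
  (univ.filter (fun k : Fin M =>
    m ≤ (k : ℕ) ∧ D i k = D j k ∧ (D i k = 1 ∨ D i k = 2))).card

/-- Total coincidence number between two rows. -/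
def lam {N M : ℕ} (D : Fin N → Fin M → ℕ) (i j : Fin N) : ℕ :=
  (univ.filter (fun k : Fin M => D i k = D j k)).card

/-- Number of rows whose `k`-th entry is `u` and whose `l`-th entry is `v`. -/
def nuv {N M : ℕ} (d : Fin N → Fin M → ℕ) (k l : Fin M) (u v : ℕ) : ℕ :=
  (univ.filter (fun i : Fin N => d i k = u ∧ d i l = v)).card

/-- Non-orthogonality of a pair of columns. -/
def fNOD {N M : ℕ} (q : Fin M → ℕ) (d : Fin N → Fin M → ℕ) (k l : Fin M) : ℝ :=
  ∑ u ∈ Finset.range (q k), ∑ v ∈ Finset.range (q l),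
    ((nuv d k l u v : ℝ) - (N : ℝ) / ((q k : ℝ) * (q l : ℝ))) ^ 2

/-- The `E(f_NOD)` criterion: average non-orthogonality over all pairs of columns. -/
def EfNOD {N M : ℕ} (q : Fin M → ℕ) (d : Fin N → Fin M → ℕ) : ℝ :=
  (∑ k : Fin M, ∑ l : Fin M, if (k : ℕ) < (l : ℕ) then fNOD q d k l else 0) /
    (Nat.choose M 2 : ℝ)

/-- Stacking the stage designs `d 0, …, d (l-1)` on top of one another. -/
def stack (M : ℕ) (ns : ℕ → ℕ) (d : (j : ℕ) → Fin (ns j) → Fin M → ℕ) :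
    (l : ℕ) → Fin (∑ j ∈ Finset.range l, ns j) → Fin M → ℕ
  | 0 => fun _ _ => 0
  | l + 1 => fun i =>
    let i' : Fin ((∑ j ∈ Finset.range l, ns j) + ns l) :=
      Fin.cast (Finset.sum_range_succ ns l) i
    if h : (i' : ℕ) < ∑ j ∈ Finset.range l, ns j then
      stack M ns d l ⟨(i' : ℕ), h⟩
    else d l ⟨(i' : ℕ) - ∑ j ∈ Finset.range l, ns j, by have := i'.isLt; omega⟩

def aa : ℝ := Real.log (6 / 5)

def bb : ℝ := Real.log (27 / 23)

/-- The constant `C(s)`. -/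
def Cconst (n n1 m s : ℕ) : ℝ :=
  -(((4 : ℝ) / 3) ^ s - ((n : ℝ) ^ 2 / ((n : ℝ) + n1) ^ 2) * ((3 : ℝ) / 2) ^ s) * ((4 : ℝ) / 3) ^ m
  + ((n1 : ℝ) / ((n : ℝ) + n1) ^ 2) * ((3 : ℝ) / 2) ^ (m + s)

def phi1 (n1 m1 m2 r : ℕ) : ℝ :=
  aa * m1 * ((n1 : ℝ) - 2) / (2 * ((n1 : ℝ) - 1)) + bb * m2 * ((n1 : ℝ) - 3) / (3 * ((n1 : ℝ) - 1))
  + bb * r * ((n1 : ℝ) - 2) / (2 * ((n1 : ℝ) - 1))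

def phi2 (m1 m2 : ℕ) : ℝ := aa * m1 / 2 + bb * m2 / 3

def T1c (n1 m1 m2 r : ℕ) : ℝ := (n1 : ℝ) * ((n1 : ℝ) - 1) * Real.exp (phi1 n1 m1 m2 r)

def T2c (n n1 m1 m2 : ℕ) : ℝ := (n : ℝ) * (n1 : ℝ) * Real.exp (phi2 m1 m2)

/-- Lower bound `LBW3` (mixed-level case, Theorem 1). -/
def LBW3 (n n1 m1 m2 r : ℕ) (wd0 : ℝ) : ℝ :=
  Cconst n n1 (m1 + m2) r + ((n : ℝ) ^ 2 / ((n : ℝ) + n1) ^ 2) * ((3 : ℝ) / 2) ^ r * wd0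
  + (1 / ((n : ℝ) + n1) ^ 2) * ((5 : ℝ) / 4) ^ m1 * ((23 : ℝ) / 18) ^ (m2 + r) *
      (T1c n1 m1 m2 r + 2 * T2c n n1 m1 m2)

def phi1p (n1 m r : ℕ) : ℝ :=
  aa * m * ((n1 : ℝ) - 2) / (2 * ((n1 : ℝ) - 1)) + bb * r * ((n1 : ℝ) - 2) / (2 * ((n1 : ℝ) - 1))

def T1pc (n1 m r : ℕ) : ℝ := (n1 : ℝ) * ((n1 : ℝ) - 1) * Real.exp (phi1p n1 m r)

def w1 (m : ℕ) : ℕ := m / 2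

def q1c (n n1 m : ℕ) : ℝ := (m : ℝ) * n * n1 / 2 - (n : ℝ) * n1 * (w1 m : ℝ)

def p1c (n n1 m : ℕ) : ℝ := (n : ℝ) * n1 - q1c n n1 m

/-- Lower bound `LBW3` for a two-level initial design (Theorem 2). -/
def LBW32 (n n1 m r : ℕ) (wd0 : ℝ) : ℝ :=
  Cconst n n1 m r + ((n : ℝ) ^ 2 / ((n : ℝ) + n1) ^ 2) * ((3 : ℝ) / 2) ^ r * wd0
  + (1 / ((n : ℝ) + n1) ^ 2) * ((5 : ℝ) / 4) ^ m * ((23 : ℝ) / 18) ^ r *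
      (T1pc n1 m r + 2 * (p1c n n1 m * ((6 : ℝ) / 5) ^ w1 m + q1c n n1 m * ((6 : ℝ) / 5) ^ (w1 m + 1)))

def w2 (n1 m r : ℕ) : ℤ :=
  ⌊(m : ℝ) * ((n1 : ℝ) - 3) / (3 * ((n1 : ℝ) - 1)) + (r : ℝ) * ((n1 : ℝ) - 2) / (2 * ((n1 : ℝ) - 1))⌋

def q2c (n1 m r : ℕ) : ℝ :=
  (m : ℝ) * n1 * ((n1 : ℝ) - 3) / 3 + (r : ℝ) * n1 * ((n1 : ℝ) - 2) / 2
  - (n1 : ℝ) * ((n1 : ℝ) - 1) * (w2 n1 m r : ℝ)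

def p2c (n1 m r : ℕ) : ℝ := (n1 : ℝ) * ((n1 : ℝ) - 1) - q2c n1 m r

def w3 (m : ℕ) : ℕ := m / 3

def q3c (n n1 m : ℕ) : ℝ := (m : ℝ) * n * n1 / 3 - (n : ℝ) * n1 * (w3 m : ℝ)

def p3c (n n1 m : ℕ) : ℝ := (n : ℝ) * n1 - q3c n n1 m

/-- Lower bound `LBW3` for a three-level initial design (Theorem 3). -/
def LBW33 (n n1 m r : ℕ) (wd0 : ℝ) : ℝ :=
  Cconst n n1 m r + ((n : ℝ) ^ 2 / ((n : ℝ) + n1) ^ 2) * ((3 : ℝ) / 2) ^ r * wd0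
  + (1 / ((n : ℝ) + n1) ^ 2) * ((23 : ℝ) / 18) ^ (m + r) *
      (p2c n1 m r * ((27 : ℝ) / 23) ^ w2 n1 m r + q2c n1 m r * ((27 : ℝ) / 23) ^ (w2 n1 m r + 1)
       + 2 * (p3c n n1 m * ((27 : ℝ) / 23) ^ w3 m + q3c n n1 m * ((27 : ℝ) / 23) ^ (w3 m + 1)))

/-- Lower bound of Theorem 4 for a mixed-level initial design. -/
def LBW3b1 (n n1 m1 m2 r : ℕ) (wd0 : ℝ) : ℝ :=
  Cconst n n1 (m1 + m2) (r + 1) + ((n : ℝ) ^ 2 / ((n : ℝ) + n1) ^ 2) * ((3 : ℝ) / 2) ^ (r + 1) * wd0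
  + (1 / ((n : ℝ) + n1) ^ 2) * ((5 : ℝ) / 4) ^ m1 * ((23 : ℝ) / 18) ^ (m2 + r) *
      ((3 : ℝ) / 2 * T1c n1 m1 m2 r + 2 * ((5 : ℝ) / 4) * T2c n n1 m1 m2)

/-- Lower bound of Theorem 4 for a two-level initial design. -/
def LBW3b2 (n n1 m r : ℕ) (wd0 : ℝ) : ℝ :=
  Cconst n n1 m (r + 1) + ((n : ℝ) ^ 2 / ((n : ℝ) + n1) ^ 2) * ((3 : ℝ) / 2) ^ (r + 1) * wd0
  + (1 / ((n : ℝ) + n1) ^ 2) * ((5 : ℝ) / 4) ^ m * ((23 : ℝ) / 18) ^ r *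
      ((3 : ℝ) / 2 * T1pc n1 m r +
        2 * ((5 : ℝ) / 4) * (p1c n n1 m * ((6 : ℝ) / 5) ^ w1 m + q1c n n1 m * ((6 : ℝ) / 5) ^ (w1 m + 1)))

/-- Lower bound of Theorem 4 for a three-level initial design. -/
def LBW3b3 (n n1 m r : ℕ) (wd0 : ℝ) : ℝ :=
  Cconst n n1 m (r + 1) + ((n : ℝ) ^ 2 / ((n : ℝ) + n1) ^ 2) * ((3 : ℝ) / 2) ^ (r + 1) * wd0
  + (1 / ((n : ℝ) + n1) ^ 2) * ((23 : ℝ) / 18) ^ (m + r) *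
      ((3 : ℝ) / 2 * (p2c n1 m r * ((27 : ℝ) / 23) ^ w2 n1 m r
                      + q2c n1 m r * ((27 : ℝ) / 23) ^ (w2 n1 m r + 1))
       + 2 * ((5 : ℝ) / 4) * (p3c n n1 m * ((27 : ℝ) / 23) ^ w3 m
                              + q3c n n1 m * ((27 : ℝ) / 23) ^ (w3 m + 1)))

def phi1B (n1 m1 m2 r : ℕ) : ℝ :=
  aa * ((m1 : ℝ) + 1) * ((n1 : ℝ) - 2) / (2 * ((n1 : ℝ) - 1))
  + bb * m2 * ((n1 : ℝ) - 3) / (3 * ((n1 : ℝ) - 1))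
  + bb * r * ((n1 : ℝ) - 2) / (2 * ((n1 : ℝ) - 1))

def phi2B (m1 m2 : ℕ) : ℝ := aa * ((m1 : ℝ) + 1) / 2 + bb * m2 / 3

def T1Bc (n1 m1 m2 r : ℕ) : ℝ := (n1 : ℝ) * ((n1 : ℝ) - 1) * Real.exp (phi1B n1 m1 m2 r)

def T2Bc (n n1 m1 m2 : ℕ) : ℝ := (n : ℝ) * (n1 : ℝ) * Real.exp (phi2B m1 m2)

/-- Lower bound `LBW3B` (Theorem 5). -/
def LBW3B (n n1 m1 m2 r : ℕ) (wd0 : ℝ) : ℝ :=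
  Cconst n n1 (m1 + m2) (r + 2) + ((n : ℝ) ^ 2 / ((n : ℝ) + n1) ^ 2) * ((3 : ℝ) / 2) ^ (r + 2) * wd0
  + (1 / ((n : ℝ) + n1) ^ 2) * ((5 : ℝ) / 4) ^ (m1 + 1) * ((23 : ℝ) / 18) ^ (m2 + r) *
      ((3 : ℝ) / 2 * T1Bc n1 m1 m2 r + 2 * ((5 : ℝ) / 4) * T2Bc n n1 m1 m2)

def psi1 (n1 m1 m2 r : ℕ) : ℤ :=
  ⌊((m1 : ℝ) * ((n1 : ℝ) - 2) / 2 + (m2 : ℝ) * ((n1 : ℝ) - 3) / 3 + (r : ℝ) * ((n1 : ℝ) - 2) / 2) /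
      ((n1 : ℝ) - 1)⌋

def eta1 (n1 m1 m2 r : ℕ) : ℝ :=
  (m1 : ℝ) * n1 * ((n1 : ℝ) - 2) / 2 + (m2 : ℝ) * n1 * ((n1 : ℝ) - 3) / 3
  + (r : ℝ) * n1 * ((n1 : ℝ) - 2) / 2 - (n1 : ℝ) * ((n1 : ℝ) - 1) * (psi1 n1 m1 m2 r : ℝ)

def zeta1 (n1 m1 m2 r : ℕ) : ℝ := (n1 : ℝ) * ((n1 : ℝ) - 1) - eta1 n1 m1 m2 r

def psi2 (m1 m2 : ℕ) : ℤ := ⌊(m1 : ℝ) / 2 + (m2 : ℝ) / 3⌋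

def eta2 (n n1 m1 m2 : ℕ) : ℝ :=
  (m1 : ℝ) * n * n1 / 2 + (m2 : ℝ) * n * n1 / 3 - (n : ℝ) * n1 * (psi2 m1 m2 : ℝ)

def zeta2 (n n1 m1 m2 : ℕ) : ℝ := (n : ℝ) * n1 - eta2 n n1 m1 m2

def Q1c (n1 m1 m2 r : ℕ) : ℝ :=
  zeta1 n1 m1 m2 r * (psi1 n1 m1 m2 r : ℝ) ^ 2 + eta1 n1 m1 m2 r * ((psi1 n1 m1 m2 r : ℝ) + 1) ^ 2

def Q1pc (n1 m1 m2 r : ℕ) : ℝ :=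
  zeta1 n1 m1 m2 r * ((psi1 n1 m1 m2 r : ℝ) + 1) ^ 2 + eta1 n1 m1 m2 r * ((psi1 n1 m1 m2 r : ℝ) + 2) ^ 2

def Q2c (n n1 m1 m2 : ℕ) : ℝ :=
  zeta2 n n1 m1 m2 * (psi2 m1 m2 : ℝ) ^ 2 + eta2 n n1 m1 m2 * ((psi2 m1 m2 : ℝ) + 1) ^ 2

/-- Lower bound `LBf3` for `E(f_NOD)` of the column augmented design. -/
def LBf3 (n n1 m1 m2 r : ℕ) (ef0 : ℝ) : ℝ :=
  ((m1 : ℝ) + m2) * ((m1 : ℝ) + m2 - 1) / (((m1 : ℝ) + m2 + r) * ((m1 : ℝ) + m2 + r - 1)) * ef0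
  + 1 / (((m1 : ℝ) + m2 + r) * ((m1 : ℝ) + m2 + r - 1)) * (Q1c n1 m1 m2 r + 2 * Q2c n n1 m1 m2)
  + ((n : ℝ) + n1) * ((m1 : ℝ) + m2 + r) / ((m1 : ℝ) + m2 + r - 1)
  - 1 / (((m1 : ℝ) + m2 + r) * ((m1 : ℝ) + m2 + r - 1)) *
    ((n : ℝ) * ((m1 : ℝ) + m2) ^ 2
      - (n : ℝ) ^ 2 * (((m1 : ℝ) + (m1 : ℝ) ^ 2) / 4 + (2 * (m2 : ℝ) + (m2 : ℝ) ^ 2) / 9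
          + (m1 : ℝ) * m2 / 3)
      - (r : ℝ) * m1 * n * ((n : ℝ) - 2)
      - 2 * (r : ℝ) * m2 * n * ((n : ℝ) - 3) / 3
      - (n : ℝ) * ((n : ℝ) - 1) * (r : ℝ) ^ 2
      + (r : ℝ) * ((n : ℝ) ^ 2 + (n1 : ℝ) ^ 2 / 2)
      + ((m1 : ℝ) / 2 + (m2 : ℝ) / 3 + (m1 : ℝ) * ((m1 : ℝ) - 1) / 4
          + ((m2 : ℝ) + r) * ((m2 : ℝ) + r - 1) / 9 + (m1 : ℝ) * ((m2 : ℝ) + r) / 3)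
        * ((n : ℝ) + n1) ^ 2)

/-- Lower bound `LBf3b` for `E(f_NOD)` of the design with one added blocking column. -/
def LBf3b (n n1 m1 m2 r : ℕ) (ef0 : ℝ) : ℝ :=
  ((m1 : ℝ) + m2) * ((m1 : ℝ) + m2 - 1) / (((m1 : ℝ) + m2 + r + 1) * ((m1 : ℝ) + m2 + r)) * ef0
  + 1 / (((m1 : ℝ) + m2 + r + 1) * ((m1 : ℝ) + m2 + r)) * (Q1pc n1 m1 m2 r + 2 * Q2c n n1 m1 m2)
  + ((n : ℝ) + n1) * ((m1 : ℝ) + m2 + r + 1) / ((m1 : ℝ) + m2 + r)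
  - 1 / (((m1 : ℝ) + m2 + r + 1) * ((m1 : ℝ) + m2 + r)) *
    ((n : ℝ) * ((m1 : ℝ) + m2) ^ 2
      - (n : ℝ) ^ 2 * (((m1 : ℝ) + (m1 : ℝ) ^ 2) / 4 + (2 * (m2 : ℝ) + (m2 : ℝ) ^ 2) / 9
          + (m1 : ℝ) * m2 / 3)
      - ((r : ℝ) + 1) * m1 * n * ((n : ℝ) - 2)
      - 2 * ((r : ℝ) + 1) * m2 * n * ((n : ℝ) - 3) / 3
      - (n : ℝ) * ((n : ℝ) - 1) * ((r : ℝ) + 1) ^ 2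
      + (r : ℝ) * ((n : ℝ) ^ 2 + (n1 : ℝ) ^ 2 / 2) + (n : ℝ) ^ 2 + (n1 : ℝ) ^ 2
      + ((m1 : ℝ) / 2 + (m2 : ℝ) / 3 + (m1 : ℝ) * ((m1 : ℝ) + 1) / 4
          + ((m2 : ℝ) + r) * ((m2 : ℝ) + r - 1) / 9 + ((m1 : ℝ) + 1) * ((m2 : ℝ) + r) / 3)
        * ((n : ℝ) + n1) ^ 2)

/-- Lower bound `LBf3B` for `E(f_NOD)` of the design with two added blocking columns. -/
def LBf3B (n n1 m1 m2 r : ℕ) (ef0 : ℝ) : ℝ :=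
  ((m1 : ℝ) + m2) * ((m1 : ℝ) + m2 - 1) / (((m1 : ℝ) + m2 + r + 2) * ((m1 : ℝ) + m2 + r + 1)) * ef0
  + 1 / (((m1 : ℝ) + m2 + r + 2) * ((m1 : ℝ) + m2 + r + 1)) *
      (Q1pc n1 (m1 + 1) m2 r + 2 * Q2c n n1 (m1 + 1) m2)
  + ((n : ℝ) + n1) * ((m1 : ℝ) + m2 + r + 2) / ((m1 : ℝ) + m2 + r + 1)
  - 1 / (((m1 : ℝ) + m2 + r + 2) * ((m1 : ℝ) + m2 + r + 1)) *
    ((n : ℝ) * ((m1 : ℝ) + m2) ^ 2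
      - (n : ℝ) ^ 2 * (((m1 : ℝ) + (m1 : ℝ) ^ 2) / 4 + (2 * (m2 : ℝ) + (m2 : ℝ) ^ 2) / 9
          + (m1 : ℝ) * m2 / 3)
      - ((r : ℝ) + 2) * m1 * n * ((n : ℝ) - 2)
      - 2 * ((r : ℝ) + 2) * m2 * n * ((n : ℝ) - 3) / 3
      - (n : ℝ) * ((n : ℝ) - 1) * ((r : ℝ) + 2) ^ 2
      + ((r : ℝ) + 2) * (n : ℝ) ^ 2 + (3 + (r : ℝ)) * (n1 : ℝ) ^ 2 / 2 + (n : ℝ) * n1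
      + ((m1 : ℝ) / 2 + (m2 : ℝ) / 3 + ((m1 : ℝ) + 2) * ((m1 : ℝ) + 1) / 4
          + ((m2 : ℝ) + r) * ((m2 : ℝ) + r - 1) / 9 + ((m1 : ℝ) + 2) * ((m2 : ℝ) + r) / 3)
        * ((n : ℝ) + n1) ^ 2)

/-!
Agreeing entries contribute a factor 3/2 to the kernel product of two rows, disagreeing ones 5/4
(two levels) or 23/18 (three levels), so the kernel product is a constant times
(6/5)^F * (27/23)^T, where F and T count the agreeing two- and three-level columns. Split the double
sum defining WD(D3b) into blocks: the initial/initial block is (3/2)^(r+1) times the one of `d0`,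
and balance of the columns fixes the total of F (and T) over the other blocks. The initial/follow-up
block is then bounded below because (6/5)^F lies above its secant through w1 and w1 + 1 at every
integer F, and the off-diagonal part of the follow-up block by Jensen's inequality for exp.
-/

def wdKernel (q x y : ℕ) : ℝ :=
  3 / 2 - |uVal q x - uVal q y| * (1 - |uVal q x - uVal q y|)

lemma WD_eq_sum_sum_prod_wdKernel {N M : ℕ} (q : Fin M → ℕ) (x : Fin N → Fin M → ℕ) :
    WD q x =
      -(4 / 3 : ℝ) ^ M +
        1 / (N : ℝ) ^ 2 * ∑ i, ∑ j, ∏ k, wdKernel (q k) (x i k) (x j k) :=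
  rfl

@[simp] lemma wdKernel_self (q x : ℕ) : wdKernel q x x = 3 / 2 := by simp [wdKernel]

lemma wdKernel_comm (q x y : ℕ) : wdKernel q x y = wdKernel q y x := by
  simp [wdKernel, abs_sub_comm]

lemma wdKernel_two {x y : ℕ} (hx : x < 2) (hy : y < 2) :
    wdKernel 2 x y = if x = y then 3 / 2 else 5 / 4 := by
  interval_cases x <;> interval_cases y <;> norm_num [wdKernel, uVal, abs_of_nonneg, abs_of_nonpos]

lemma wdKernel_three {x y : ℕ} (hx : x < 3) (hy : y < 3) :
    wdKernel 3 x y = if x = y then 3 / 2 else 23 / 18 := by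
  interval_cases x <;> interval_cases y <;> norm_num [wdKernel, uVal, abs_of_nonneg, abs_of_nonpos]

def coincidences {M : ℕ} (x y : Fin M → ℕ) : ℕ := #{k | x k = y k}

lemma coincidences_self {M : ℕ} (x : Fin M → ℕ) : coincidences x x = M := by
  simp [coincidences]

lemma prod_wdKernel_eq_pow_mul_pow_coincidences {M q : ℕ} {c : ℝ} (hc : c ≠ 0)
    {x y : Fin M → ℕ} (h : ∀ k, wdKernel q (x k) (y k) = if x k = y k then 3 / 2 else c) :
    ∏ k, wdKernel q (x k) (y k) = c ^ M * (3 / 2 / c) ^ coincidences x y := by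
  have hfactor : ∀ k, wdKernel q (x k) (y k) = c * if x k = y k then 3 / 2 / c else 1 := by
    intro k
    rw [h]
    split_ifs <;> field_simp
  rw [prod_congr rfl fun k _ => hfactor k, prod_mul_distrib, prod_const, card_univ,
    Fintype.card_fin, prod_ite, prod_const, prod_const_one, mul_one, coincidences]

lemma prod_wdKernel_two {M : ℕ} {x y : Fin M → ℕ} (hx : ∀ k, x k < 2)
    (hy : ∀ k, y k < 2) :
    ∏ k, wdKernel 2 (x k) (y k) = (5 / 4) ^ M * (6 / 5) ^ coincidences x y := by
  rw [prod_wdKernel_eq_pow_mul_pow_coincidences (by norm_num) fun k => wdKernel_two (hx k) (hy k)]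
  norm_num

lemma prod_wdKernel_three {M : ℕ} {x y : Fin M → ℕ} (hx : ∀ k, x k < 3)
    (hy : ∀ k, y k < 3) :
    ∏ k, wdKernel 3 (x k) (y k) = (23 / 18) ^ M * (27 / 23) ^ coincidences x y := by
  rw [prod_wdKernel_eq_pow_mul_pow_coincidences (by norm_num) fun k => wdKernel_three (hx k) (hy k)]
  norm_num

lemma prod_wdKernel_qfun_split {m r : ℕ} (u v : Fin (m + r + 1) → ℕ) :
    ∏ k : Fin (m + r + 1), wdKernel (qfun m 0 r k) (u k) (v k) =
      (∏ k : Fin m,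
        wdKernel 2 (u (Fin.castSucc (Fin.castAdd r k))) (v (Fin.castSucc (Fin.castAdd r k)))) *
      (∏ k : Fin r,
        wdKernel 3 (u (Fin.castSucc (Fin.natAdd m k))) (v (Fin.castSucc (Fin.natAdd m k)))) *
      wdKernel 2 (u (Fin.last _)) (v (Fin.last _)) := by
  rw [Fin.prod_univ_castSucc, Fin.prod_univ_add]
  simp [qfun]

section Entries

variable {n n1 m r M : ℕ}

@[simp] lemma appendOne_castSucc (D : Fin (n + n1) → Fin M → ℕ) (i : Fin (n + n1))
    (k : Fin M) :
    appendOne n n1 M D i (Fin.castSucc k) = D i k := by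
  simp [appendOne]

@[simp] lemma appendOne_castAdd_last (D : Fin (n + n1) → Fin M → ℕ) (i : Fin n) :
    appendOne n n1 M D (Fin.castAdd n1 i) (Fin.last M) = 0 := by
  simp [appendOne]

@[simp] lemma appendOne_natAdd_last (D : Fin (n + n1) → Fin M → ℕ) (j : Fin n1) :
    appendOne n n1 M D (Fin.natAdd n j) (Fin.last M) = 1 := by
  simp [appendOne]

variable (d0 : Fin n → Fin m → ℕ) (d1 : Fin n1 → Fin m → ℕ)
  (d2 : Fin n1 → Fin r → ℕ)

@[simp] lemma augDesign_castAdd_castAdd (i : Fin n) (k : Fin m) :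
    augDesign n n1 m r d0 d1 d2 (Fin.castAdd n1 i) (Fin.castAdd r k) = d0 i k := by
  simp [augDesign]

@[simp] lemma augDesign_castAdd_natAdd (i : Fin n) (k : Fin r) :
    augDesign n n1 m r d0 d1 d2 (Fin.castAdd n1 i) (Fin.natAdd m k) = 0 := by
  simp [augDesign]

@[simp] lemma augDesign_natAdd_castAdd (j : Fin n1) (k : Fin m) :
    augDesign n n1 m r d0 d1 d2 (Fin.natAdd n j) (Fin.castAdd r k) = d1 j k := by
  simp [augDesign]

@[simp] lemma augDesign_natAdd_natAdd (j : Fin n1) (k : Fin r) :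
    augDesign n n1 m r d0 d1 d2 (Fin.natAdd n j) (Fin.natAdd m k) = d2 j k := by
  simp [augDesign]

end Entries

lemma sum_sum_ite_eq_of_balanced {N N' a b : ℕ} {x : Fin N → ℕ} {y : Fin N' → ℕ}
    (hxa : 2 * #{i | x i = a} = N) (hxb : 2 * #{i | x i = b} = N)
    (hy : ∀ j, y j = a ∨ y j = b) :
    ∑ i, ∑ j, (if x i = y j then 1 else 0 : ℝ) = N * N' / 2 := by
  have hcol : ∀ j, ∑ i, (if x i = y j then 1 else 0 : ℝ) = N / 2 := by
    intro j
    have hcount : 2 * #{i | x i = y j} = N := by rcases hy j with h | h <;> rwa [h]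
    have hcount' := congrArg (Nat.cast : ℕ → ℝ) hcount
    push_cast at hcount'
    rw [sum_boole]
    linarith
  rw [sum_comm, sum_congr rfl fun j _ => hcol j, sum_const, card_univ, Fintype.card_fin,
    nsmul_eq_mul]
  ring

lemma sum_sum_coincidences_of_balanced {N N' M a b : ℕ} {x : Fin N → Fin M → ℕ}
    {y : Fin N' → Fin M → ℕ} (hxa : ∀ k, 2 * #{i | x i k = a} = N)
    (hxb : ∀ k, 2 * #{i | x i k = b} = N) (hy : ∀ j k, y j k = a ∨ y j k = b) :
    ∑ i, ∑ j, (coincidences (x i) (y j) : ℝ) = M * N * N' / 2 := by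
  simp only [coincidences, card_filter, Nat.cast_sum, Nat.cast_ite, Nat.cast_one, Nat.cast_zero]
  rw [sum_congr rfl fun i _ => sum_comm, sum_comm,
    sum_congr rfl fun k _ => sum_sum_ite_eq_of_balanced (hxa k) (hxb k) (hy · k),
    sum_const, card_univ, Fintype.card_fin, nsmul_eq_mul]
  ring

-- The line through `(w, b ^ w)` and `(w + 1, b ^ (w + 1))` stays below `b ^ F` at integers.
lemma pow_mul_secant_le_pow {b : ℝ} (hb : 1 ≤ b) (w F : ℕ) :
    b ^ w * (1 + (b - 1) * ((F : ℝ) - w)) ≤ b ^ F := by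
  rcases le_total w F with h | h
  · obtain ⟨k, rfl⟩ := Nat.exists_eq_add_of_le h
    have hbern := one_add_mul_le_pow (a := b - 1) (by linarith) k
    rw [add_sub_cancel] at hbern
    rw [pow_add]
    push_cast
    exact mul_le_mul_of_nonneg_left (by linarith) (by positivity)
  · obtain ⟨k, rfl⟩ := Nat.exists_eq_add_of_le h
    have hk : ∀ j : ℕ, b ^ j * (1 - (b - 1) * j) ≤ 1 := by
      intro j
      induction j with
      | zero => simp
      | succ j ih =>
        have hstep : b ^ (j + 1) * (1 - (b - 1) * (j + 1 : ℕ))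
            = b ^ j * (1 - (b - 1) * j) - b ^ j * ((b - 1) ^ 2 * (j + 1)) := by
          push_cast
          ring
        have : 0 ≤ b ^ j * ((b - 1) ^ 2 * (j + 1)) := by positivity
        linarith
    rw [pow_add]
    push_cast
    calc b ^ F * b ^ k * (1 + (b - 1) * ((F : ℝ) - (F + k)))
        = b ^ F * (b ^ k * (1 - (b - 1) * k)) := by ring
      _ ≤ b ^ F * 1 := mul_le_mul_of_nonneg_left (hk k) (by positivity)
      _ = b ^ F := mul_one _

lemma sum_pow_ge_of_sum_eq {ι : Type*} (s : Finset ι) (F : ι → ℕ) (w : ℕ) {b q : ℝ}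
    (hb : 1 ≤ b) (hq : ∑ i ∈ s, (F i : ℝ) = #s * w + q) :
    (#s - q) * b ^ w + q * b ^ (w + 1) ≤ ∑ i ∈ s, b ^ F i := by
  calc (#s - q) * b ^ w + q * b ^ (w + 1)
      = ∑ i ∈ s, b ^ w * (1 + (b - 1) * ((F i : ℝ) - w)) := by
        rw [← mul_sum, sum_add_distrib, ← mul_sum, sum_sub_distrib, hq]
        simp only [sum_const, nsmul_eq_mul, mul_one]
        ring
    _ ≤ ∑ i ∈ s, b ^ F i := sum_le_sum fun i _ => pow_mul_secant_le_pow hb w (F i)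

lemma card_mul_exp_le_sum_exp {ι : Type*} (s : Finset ι) (f : ι → ℝ) {c : ℝ}
    (hc : ∑ i ∈ s, f i = #s * c) : #s * Real.exp c ≤ ∑ i ∈ s, Real.exp (f i) := by
  calc #s * Real.exp c = ∑ i ∈ s, Real.exp c * (f i - c + 1) := by
        rw [← mul_sum, sum_add_distrib, sum_sub_distrib, hc]
        simp only [sum_const, nsmul_eq_mul, mul_one]
        ring
    _ ≤ ∑ i ∈ s, Real.exp (f i) := sum_le_sum fun i _ => by
        calc Real.exp c * (f i - c + 1) ≤ Real.exp c * Real.exp (f i - c) :=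
              mul_le_mul_of_nonneg_left (Real.add_one_le_exp _) (Real.exp_pos c).le
          _ = Real.exp (f i) := by rw [← Real.exp_add, add_sub_cancel]

lemma sum_sum_fin_add_of_symm {n n1 : ℕ} (P : Fin (n + n1) → Fin (n + n1) → ℝ)
    (hP : ∀ a b, P a b = P b a) :
    ∑ a, ∑ b, P a b = ∑ i : Fin n, ∑ j : Fin n, P (Fin.castAdd n1 i) (Fin.castAdd n1 j)
      + 2 * ∑ i : Fin n, ∑ j : Fin n1, P (Fin.castAdd n1 i) (Fin.natAdd n j)
      + ∑ i : Fin n1, ∑ j : Fin n1, P (Fin.natAdd n i) (Fin.natAdd n j) := by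
  simp only [Fin.sum_univ_add, sum_add_distrib]
  rw [sum_comm (f := fun i j => P (Fin.natAdd n i) (Fin.castAdd n1 j))]
  simp only [hP (Fin.natAdd n _) (Fin.castAdd n1 _)]
  ring

lemma sum_sum_eq_sum_add_sum_offDiag {ι M : Type*} [Fintype ι] [DecidableEq ι]
    [AddCommMonoid M] (f : ι → ι → M) :
    ∑ i, ∑ j, f i j = ∑ i, f i i + ∑ p ∈ (univ : Finset ι).offDiag, f p.1 p.2 := by
  rw [← sum_product', ← diag_union_offDiag, sum_union (disjoint_diag_offDiag _), sum_diag]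

lemma exp_aa : Real.exp aa = 6 / 5 := by
  rw [aa, Real.exp_log (by norm_num)]

lemma exp_bb : Real.exp bb = 27 / 23 := by
  rw [bb, Real.exp_log (by norm_num)]

lemma exp_aa_mul_add_bb_mul (x y : ℕ) :
    Real.exp (aa * x + bb * y) = (6 / 5) ^ x * (27 / 23) ^ y := by
  rw [Real.exp_add, mul_comm aa, mul_comm bb, Real.exp_nat_mul, Real.exp_nat_mul, exp_aa, exp_bb]

section Blocks

variable {n n1 m r : ℕ} {d0 : Fin n → Fin m → ℕ} {d1 : Fin n1 → Fin m → ℕ}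
  {d2 : Fin n1 → Fin r → ℕ}

local notation "D3b" => appendOne n n1 (m + r) (augDesign n n1 m r d0 d1 d2)

lemma prod_wdKernel_initial_initial (i j : Fin n) :
    ∏ k : Fin (m + r + 1),
        wdKernel (qfun m 0 r k) (D3b (Fin.castAdd n1 i) k) (D3b (Fin.castAdd n1 j) k)
      = (3 / 2) ^ (r + 1) * ∏ k : Fin m, wdKernel (qfun m 0 0 k) (d0 i k) (d0 j k) := by
  simp only [prod_wdKernel_qfun_split, appendOne_castSucc, augDesign_castAdd_castAdd,
    augDesign_castAdd_natAdd, appendOne_castAdd_last, wdKernel_self, prod_const, card_univ,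
    Fintype.card_fin]
  have hq : ∀ k : Fin m, qfun m 0 0 k = 2 := fun k => if_pos k.isLt
  simp only [hq]
  ring

lemma prod_wdKernel_initial_followup (h0 : ∀ i k, d0 i k < 2) (h1 : ∀ j k, d1 j k < 2)
    (h2 : ∀ j k, d2 j k = 1 ∨ d2 j k = 2) (i : Fin n) (j : Fin n1) :
    ∏ k : Fin (m + r + 1),
        wdKernel (qfun m 0 r k) (D3b (Fin.castAdd n1 i) k) (D3b (Fin.natAdd n j) k)
      = (5 / 4) ^ (m + 1) * (23 / 18) ^ r * (6 / 5) ^ coincidences (d0 i) (d1 j) := by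
  have hfresh : ∀ k, wdKernel 3 0 (d2 j k) = 23 / 18 := fun k => by
    rw [wdKernel_three (by norm_num) (by rcases h2 j k with h | h <;> omega),
      if_neg (by rcases h2 j k with h | h <;> omega)]
  simp only [prod_wdKernel_qfun_split, appendOne_castSucc, augDesign_castAdd_castAdd,
    augDesign_castAdd_natAdd, augDesign_natAdd_castAdd, augDesign_natAdd_natAdd,
    appendOne_castAdd_last, appendOne_natAdd_last, prod_wdKernel_two (h0 i) (h1 j), hfresh,
    prod_const, card_univ, Fintype.card_fin,
    wdKernel_two (by norm_num : 0 < 2) (by norm_num : 1 < 2)]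
  rw [if_neg zero_ne_one, pow_succ]
  ring

lemma prod_wdKernel_followup_followup (h1 : ∀ j k, d1 j k < 2) (h2 : ∀ j k, d2 j k < 3)
    (i j : Fin n1) :
    ∏ k : Fin (m + r + 1),
        wdKernel (qfun m 0 r k) (D3b (Fin.natAdd n i) k) (D3b (Fin.natAdd n j) k)
      = 3 / 2 * (5 / 4) ^ m * (23 / 18) ^ r *
        ((6 / 5) ^ coincidences (d1 i) (d1 j) * (27 / 23) ^ coincidences (d2 i) (d2 j)) := by
  simp only [prod_wdKernel_qfun_split, appendOne_castSucc, augDesign_natAdd_castAdd,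
    augDesign_natAdd_natAdd, appendOne_natAdd_last, prod_wdKernel_two (h1 i) (h1 j),
    prod_wdKernel_three (h2 i) (h2 j), wdKernel_self]
  ring

lemma sum_sum_prod_wdKernel_appendOne_augDesign (h0 : ∀ i k, d0 i k < 2)
    (h1 : ∀ j k, d1 j k < 2)
    (h2 : ∀ j k, d2 j k = 1 ∨ d2 j k = 2) :
    ∑ a, ∑ b, ∏ k : Fin (m + r + 1), wdKernel (qfun m 0 r k) (D3b a k) (D3b b k)
      = (3 / 2) ^ (r + 1) * ∑ i, ∑ j, ∏ k : Fin m, wdKernel (qfun m 0 0 k) (d0 i k) (d0 j k)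
        + 2 * ((5 / 4) ^ (m + 1) * (23 / 18) ^ r) *
          ∑ i, ∑ j, (6 / 5 : ℝ) ^ coincidences (d0 i) (d1 j)
        + 3 / 2 * (5 / 4) ^ m * (23 / 18) ^ r * ∑ i, ∑ j,
          ((6 / 5 : ℝ) ^ coincidences (d1 i) (d1 j) *
            (27 / 23) ^ coincidences (d2 i) (d2 j)) := by
  have h2' : ∀ j k, d2 j k < 3 := fun j k => by rcases h2 j k with h | h <;> omega
  rw [sum_sum_fin_add_of_symm
    (fun a b => ∏ k : Fin (m + r + 1), wdKernel (qfun m 0 r k) (D3b a k) (D3b b k))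
    fun a b => prod_congr rfl fun k _ => wdKernel_comm _ _ _]
  simp only [prod_wdKernel_initial_initial, prod_wdKernel_initial_followup h0 h1 h2,
    prod_wdKernel_followup_followup h1 h2', ← mul_sum]
  ring

lemma initial_followup_sum_ge (h0cnt : ∀ k, ∀ v < 2, 2 * #{i | d0 i k = v} = n)
    (h1 : ∀ j k, d1 j k < 2) :
    p1c n n1 m * (6 / 5) ^ w1 m + q1c n n1 m * (6 / 5) ^ (w1 m + 1)
      ≤ ∑ i, ∑ j, (6 / 5 : ℝ) ^ coincidences (d0 i) (d1 j) := by
  have hsum : ∑ p : Fin n × Fin n1, (coincidences (d0 p.1) (d1 p.2) : ℝ) = m * n * n1 / 2 := by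
    rw [Fintype.sum_prod_type]
    exact sum_sum_coincidences_of_balanced (h0cnt · 0 two_pos) (h0cnt · 1 one_lt_two)
      fun j k => by have := h1 j k; omega
  have hcard : (#(univ : Finset (Fin n × Fin n1)) : ℝ) = n * n1 := by simp
  rw [← Fintype.sum_prod_type (f := fun p => (6 / 5 : ℝ) ^ coincidences (d0 p.1) (d1 p.2))]
  convert sum_pow_ge_of_sum_eq univ (fun p : Fin n × Fin n1 => coincidences (d0 p.1) (d1 p.2))
    (w1 m) (q := q1c n n1 m) (by norm_num : (1 : ℝ) ≤ 6 / 5)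
    (by rw [hsum, hcard, q1c]; ring) using 2
  rw [hcard, p1c]

lemma followup_followup_sum_ge (hn1 : 2 ≤ n1) (h1 : ∀ j k, d1 j k < 2)
    (h1cnt : ∀ k, ∀ v < 2, 2 * #{i | d1 i k = v} = n1)
    (h2 : ∀ j k, d2 j k = 1 ∨ d2 j k = 2)
    (h2cnt : ∀ k, 2 * #{i | d2 i k = 1} = n1 ∧ 2 * #{i | d2 i k = 2} = n1) :
    n1 * ((6 / 5) ^ m * (27 / 23) ^ r) + T1pc n1 m r ≤
      ∑ i, ∑ j, ((6 / 5 : ℝ) ^ coincidences (d1 i) (d1 j) *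
        (27 / 23) ^ coincidences (d2 i) (d2 j)) := by
  set G : Fin n1 → Fin n1 → ℝ := fun i j =>
    aa * coincidences (d1 i) (d1 j) + bb * coincidences (d2 i) (d2 j)
  have hexpG : ∀ i j, (6 / 5 : ℝ) ^ coincidences (d1 i) (d1 j) *
      (27 / 23) ^ coincidences (d2 i) (d2 j) = Real.exp (G i j) :=
    fun i j => (exp_aa_mul_add_bb_mul _ _).symm
  have hdiag : ∀ i, G i i = aa * m + bb * r := by simp [G, coincidences_self]
  have htotal : ∑ i, ∑ j, G i j = aa * (m * n1 * n1 / 2) + bb * (r * n1 * n1 / 2) := by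
    simp only [G, sum_add_distrib, ← mul_sum]
    rw [sum_sum_coincidences_of_balanced (h1cnt · 0 two_pos) (h1cnt · 1 one_lt_two)
        fun j k => by have := h1 j k; omega,
      sum_sum_coincidences_of_balanced (h2cnt · |>.1) (h2cnt · |>.2) h2]
  have hcard : (#(univ : Finset (Fin n1)).offDiag : ℝ) = n1 * (n1 - 1) := by
    rw [offDiag_card, card_univ, Fintype.card_fin, Nat.cast_sub (Nat.le_mul_self n1)]
    push_cast
    ring
  have hoff : ∑ p ∈ univ.offDiag, G p.1 p.2 =
      #(univ : Finset (Fin n1)).offDiag * phi1p n1 m r := by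
    have hsplit := sum_sum_eq_sum_add_sum_offDiag G
    simp only [hdiag, sum_const, card_univ, Fintype.card_fin, nsmul_eq_mul, htotal] at hsplit
    have hn1_sub_one : (n1 : ℝ) - 1 ≠ 0 := by
      have : (2 : ℝ) ≤ n1 := by exact_mod_cast hn1
      linarith
    rw [hcard, phi1p]
    field_simp
    linear_combination -2 * hsplit
  have hjensen := card_mul_exp_le_sum_exp _ _ hoff
  rw [hcard] at hjensen
  simp only [hexpG]
  rw [sum_sum_eq_sum_add_sum_offDiag, T1pc]
  simp only [hdiag, exp_aa_mul_add_bb_mul, sum_const, card_univ, Fintype.card_fin, nsmul_eq_mul]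
  linarith

end Blocks

lemma IsUType.two_level {N m : ℕ} {d : Fin N → Fin m → ℕ} (hd : IsUType N m 0 d) :
    (∀ i k, d i k < 2) ∧ ∀ k, ∀ v < 2, 2 * #{i | d i k = v} = N := by
  have h : ∀ k, (∀ i, d i k < 2) ∧ ∀ v < 2, 2 * #{i | d i k = v} = N := fun k => by
    have := hd k
    rwa [if_pos (show (k : ℕ) < m from k.isLt)] at this
  exact ⟨fun i k => (h k).1 i, fun k => (h k).2⟩

lemma sum_sum_prod_wdKernel_eq_sq_mul {N M : ℕ} (q : Fin M → ℕ)
    (x : Fin N → Fin M → ℕ) :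
    ∑ i, ∑ j, ∏ k, wdKernel (q k) (x i k) (x j k) = N ^ 2 * (WD q x + (4 / 3) ^ M) := by
  rw [WD_eq_sum_sum_prod_wdKernel]
  rcases Nat.eq_zero_or_pos N with rfl | hN
  · simp
  · field_simp
    ring

lemma LBW3b2_eq (n n1 m r : ℕ) (wd0 : ℝ) :
    LBW3b2 n n1 m r wd0 = -(4 / 3) ^ (m + r + 1) + 1 / ((n + n1 : ℕ) : ℝ) ^ 2 *
      ((3 / 2) ^ (r + 1) * (n ^ 2 * (wd0 + (4 / 3) ^ m))
        + 2 * ((5 / 4) ^ (m + 1) * (23 / 18) ^ r) *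
          (p1c n n1 m * (6 / 5) ^ w1 m + q1c n n1 m * (6 / 5) ^ (w1 m + 1))
        + 3 / 2 * (5 / 4) ^ m * (23 / 18) ^ r *
          (n1 * ((6 / 5) ^ m * (27 / 23) ^ r) + T1pc n1 m r)) := by
  have h : (3 / 2 : ℝ) ^ (m + (r + 1)) =
      3 / 2 * ((5 / 4) ^ m * (6 / 5) ^ m) * ((23 / 18) ^ r * (27 / 23) ^ r) := by
    rw [← mul_pow, ← mul_pow, pow_add, pow_succ]
    norm_num
    ring
  rw [LBW3b2, Cconst, h]
  push_cast
  ring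

lemma LBW3b2_le_WD_appendOne_augDesign {n n1 m r : ℕ} {d0 : Fin n → Fin m → ℕ}
    {d1 : Fin n1 → Fin m → ℕ} {d2 : Fin n1 → Fin r → ℕ} (hn1 : 2 ≤ n1)
    (hd0 : IsUType n m 0 d0) (hd1 : IsUType n1 m 0 d1) (hd2 : IsBalanced n1 r d2) :
    LBW3b2 n n1 m r (WD (fun k : Fin m => qfun m 0 0 k) d0) ≤
      WD (fun k : Fin (m + r + 1) => qfun m 0 r k)
        (appendOne n n1 (m + r) (augDesign n n1 m r d0 d1 d2)) := by
  obtain ⟨h0, h0cnt⟩ := hd0.two_level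
  obtain ⟨h1, h1cnt⟩ := hd1.two_level
  rw [WD_eq_sum_sum_prod_wdKernel (x := appendOne _ _ _ _),
    sum_sum_prod_wdKernel_appendOne_augDesign h0 h1 hd2.1,
    sum_sum_prod_wdKernel_eq_sq_mul, LBW3b2_eq]
  gcongr _ + 1 / _ * (_ + 2 * _ * ?_ + _ * ?_)
  · exact initial_followup_sum_ge h0cnt h1
  · exact followup_followup_sum_ge hn1 h1 h1cnt hd2.1 hd2.2

theorem paper_stmt_4_general (n n1 m1 m2 r : ℕ) (hn1 : 2 ≤ n1)
    (hm2 : m2 = 0)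
    (d0 : Fin n → Fin (m1 + m2) → ℕ) (d1 : Fin n1 → Fin (m1 + m2) → ℕ)
    (d2 : Fin n1 → Fin r → ℕ)
    (hd0 : IsUType n m1 m2 d0) (hd1 : IsUType n1 m1 m2 d1) (hd2 : IsBalanced n1 r d2) :
    WD (fun k : Fin (m1 + m2 + r + 1) => qfun m1 m2 r (k : ℕ)) (appendOne n n1 (m1 + m2 + r) (augDesign n n1 (m1 + m2) r d0 d1 d2)) ≥ LBW3b2 n n1 m1 r (WD (fun k : Fin (m1 + m2) => qfun m1 m2 0 (k : ℕ)) d0) := by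
  subst hm2
  exact LBW3b2_le_WD_appendOne_augDesign hn1 hd0 hd1 hd2

theorem paper_stmt_4 (n n1 m1 m2 r : ℕ) (hn : 1 ≤ n) (hn1 : 2 ≤ n1)
    (hm : 1 ≤ m1) (hm2 : m2 = 0)
    (d0 : Fin n → Fin (m1 + m2) → ℕ) (d1 : Fin n1 → Fin (m1 + m2) → ℕ)
    (d2 : Fin n1 → Fin r → ℕ)
    (hd0 : IsUType n m1 m2 d0) (hd1 : IsUType n1 m1 m2 d1) (hd2 : IsBalanced n1 r d2) :
    WD (fun k : Fin (m1 + m2 + r + 1) => qfun m1 m2 r (k : ℕ)) (appendOne n n1 (m1 + m2 + r) (augDesign n n1 (m1 + m2) r d0 d1 d2)) ≥ LBW3b2 n n1 m1 r (WD (fun k : Fin (m1 + m2) => qfun m1 m2 0 (k : ℕ)) d0) :=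
  paper_stmt_4_general n n1 m1 m2 r hn1 hm2 d0 d1 d2 hd0 hd1 hd2

end CAUD

end
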